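/- Let p ≥ 5 be prime and let c : Z_p → {R,Y,G,B} be a surjective rainbow Sidon free coloring such that: R is dominant, R is not 2-dominant, Y is 2-dominant, and the pattern YRB appears. Suppose {X₁,X₂} = {B,G}, j is odd with 0 < j < p, the pattern X₁RY appears at position i, and the pattern YRX₂ appears at position i+j−2. Then c(i + (j−1)/2) = c(i + (j+1)/2) = R. -/
import Mathlib


/-- `c` admits a rainbow solution to the Sidon equation `x₁ + x₂ = x₃ + x₄`:
a solution whose four colors are pairwise distinct. -/
def HasRainbowSidon {n : ℕ} {α : Type*} (c : ZMod n → α) : Prop :=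
  ∃ x₁ x₂ x₃ x₄ : ZMod n, x₁ + x₂ = x₃ + x₄ ∧
    c x₁ ≠ c x₂ ∧ c x₁ ≠ c x₃ ∧ c x₁ ≠ c x₄ ∧
    c x₂ ≠ c x₃ ∧ c x₂ ≠ c x₄ ∧ c x₃ ≠ c x₄

/-- The rainbow number `rb(ℤ_n, S)` of `ℤ_n` for the Sidon equation: the least `r > 0`
such that every exact (surjective) `r`-coloring of `ℤ_n` admits a rainbow Sidon solution.
(When no such `r` exists, `r = n + 1` belongs to the set vacuously, matching the
convention `rb(ℤ_n, S) = n + 1`.) -/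
noncomputable def rbSidon (n : ℕ) : ℕ :=
  sInf {r : ℕ | 0 < r ∧ ∀ c : ZMod n → Fin r, Function.Surjective c → HasRainbowSidon c}

/-- The four colors used in Section 2. -/
inductive Color : Type
  | R | Y | G | B
deriving DecidableEq

namespace MidpointRed

/-- From a rainbow-free coloring, no quadruple with equal pair sums can have
four pairwise distinct colors. -/
lemma quad_free {p : ℕ} {c : ZMod p → Color} (hfree : ¬ HasRainbowSidon c)
    (a b u v : ZMod p) (hsum : a + b = u + v)
    (h1 : c a ≠ c b) (h2 : c a ≠ c u) (h3 : c a ≠ c v)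
    (h4 : c b ≠ c u) (h5 : c b ≠ c v) (h6 : c u ≠ c v) : False :=
  hfree ⟨a, b, u, v, hsum, h1, h2, h3, h4, h5, h6⟩

/-- If two adjacent cells have the same non-R, non-Y color, the whole cyclic group
is colored with that color. -/
lemma const_of_adj_eq {p : ℕ} [NeZero p] {c : ZMod p → Color}
    (hRdom : ∀ x : ZMod p, c x = c (x + 1) ∨ c x = Color.R ∨ c (x + 1) = Color.R)
    (hY2dom : ∀ x : ZMod p, c x = c (x + 2) ∨ c x = Color.Y ∨ c (x + 2) = Color.Y)
    {x : ZMod p} (hR : c x ≠ Color.R) (hY : c x ≠ Color.Y)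
    (heq : c (x + 1) = c x) (z : ZMod p) : c z = c x := by
  have key : ∀ n : ℕ, c (x + (n : ZMod p)) = c x ∧ c (x + (n : ZMod p) + 1) = c x := by
    intro n
    induction n with
    | zero => constructor <;> simp [heq]
    | succ n ih =>
      obtain ⟨h1, h2⟩ := ih
      have e1 : x + ((n + 1 : ℕ) : ZMod p) = x + (n : ZMod p) + 1 := by push_cast; ring
      have e2 : x + (n : ZMod p) + 2 = x + (n : ZMod p) + 1 + 1 := by ring
      have hnew : c (x + (n : ZMod p) + 2) = c x := by
        rcases hRdom (x + (n : ZMod p) + 1) with h | h | h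
        · rw [e2, ← h, h2]
        · rw [h2] at h; exact absurd h hR
        · rw [← e2] at h
          rcases hY2dom (x + (n : ZMod p)) with h' | h' | h'
          · rw [h1] at h'; rw [← h'] at h; exact absurd h hR
          · rw [h1] at h'; exact absurd h' hY
          · rw [h] at h'; exact absurd h' (by intro hc; cases hc)
      refine ⟨by rw [e1]; exact h2, ?_⟩
      rw [e1, ← e2]; exact hnew
  obtain ⟨n, hn⟩ := ZMod.natCast_zmod_surjective (z - x)
  have := (key n).1
  rwa [hn, add_sub_cancel] at this

end MidpointRed

theorem midpoint_red (p : ℕ) (hp : p.Prime) (hp5 : 5 ≤ p)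
    (c : ZMod p → Color) (hsurj : Function.Surjective c)
    (hfree : ¬ HasRainbowSidon c)
    (hRdom : ∀ x : ZMod p, c x = c (x + 1) ∨ c x = Color.R ∨ c (x + 1) = Color.R)
    (hRnot2dom : ¬ ∀ x : ZMod p, c x = c (x + 2) ∨ c x = Color.R ∨ c (x + 2) = Color.R)
    (hY2dom : ∀ x : ZMod p, c x = c (x + 2) ∨ c x = Color.Y ∨ c (x + 2) = Color.Y)
    (hYRB : ∃ j : ZMod p, c j = Color.Y ∧ c (j + 1) = Color.R ∧ c (j + 2) = Color.B)
    (X₁ X₂ : Color) (hX : (X₁ = Color.B ∧ X₂ = Color.G) ∨ (X₁ = Color.G ∧ X₂ = Color.B))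
    (j : ℕ) (hjodd : Odd j) (hj0 : 0 < j) (hjp : j < p)
    (i : ZMod p)
    (h₁ : c i = X₁ ∧ c (i + 1) = Color.R ∧ c (i + 2) = Color.Y)
    (h₂ : c (i + (j : ZMod p) - 2) = Color.Y ∧ c (i + (j : ZMod p) - 1) = Color.R ∧
          c (i + (j : ZMod p)) = X₂)
    : c (i + (((j - 1) / 2 : ℕ) : ZMod p)) = Color.R ∧
      c (i + (((j + 1) / 2 : ℕ) : ZMod p)) = Color.R := by
  haveI : NeZero p := ⟨hp.ne_zero⟩
  obtain ⟨hi0, hi1, hi2⟩ := h₁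
  obtain ⟨-, -, hiJ⟩ := h₂
  -- color disequalities
  have hX1R : X₁ ≠ Color.R := by rcases hX with ⟨rfl, -⟩ | ⟨rfl, -⟩ <;> decide
  have hX1Y : X₁ ≠ Color.Y := by rcases hX with ⟨rfl, -⟩ | ⟨rfl, -⟩ <;> decide
  have hX2R : X₂ ≠ Color.R := by rcases hX with ⟨-, rfl⟩ | ⟨-, rfl⟩ <;> decide
  have hX2Y : X₂ ≠ Color.Y := by rcases hX with ⟨-, rfl⟩ | ⟨-, rfl⟩ <;> decide
  have hX12 : X₁ ≠ X₂ := by rcases hX with ⟨rfl, rfl⟩ | ⟨rfl, rfl⟩ <;> decide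
  set δ : ZMod p := (j : ZMod p) with hδdef
  -- the two key rainbow-freeness consequences
  have C1 : ∀ a b : ZMod p, a + b = i + (i + δ) → c a = Color.R → c b = Color.Y → False := by
    intro a b hsum ha hb
    refine MidpointRed.quad_free hfree a b i (i + δ) hsum ?_ ?_ ?_ ?_ ?_ ?_
    · rw [ha, hb]; decide
    · rw [ha, hi0]; exact fun h => hX1R h.symm
    · rw [ha, hiJ]; exact fun h => hX2R h.symm
    · rw [hb, hi0]; exact fun h => hX1Y h.symm
    · rw [hb, hiJ]; exact fun h => hX2Y h.symm
    · rw [hi0, hiJ]; exact hX12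
  have L1 : ∀ t : ZMod p, c t = Color.Y → c (t + δ) = Color.R → False := by
    intro t ht htj
    refine MidpointRed.quad_free hfree t (i + δ) (t + δ) i (by ring) ?_ ?_ ?_ ?_ ?_ ?_
    · rw [ht, hiJ]; exact hX2Y.symm
    · rw [ht, htj]; decide
    · rw [ht, hi0]; exact hX1Y.symm
    · rw [hiJ, htj]; exact hX2R
    · rw [hiJ, hi0]; exact hX12.symm
    · rw [htj, hi0]; exact fun h => hX1R h.symm
  -- no c x = c (x+1) for non-R colors (via const_of_adj_eq and c (i+1) = R)
  have noadj : ∀ x : ZMod p, c x ≠ Color.R → c (x + 1) = c x → False := by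
    intro x hR heq
    by_cases hY : c x = Color.Y
    · -- adjacent YY: propagate by δ
      have key : ∀ n : ℕ, c (x + (n : ZMod p) * δ) = Color.Y ∧
          c (x + (n : ZMod p) * δ + 1) = Color.Y := by
        intro n
        induction n with
        | zero => constructor <;> simp [hY, heq, hY ▸ heq]
        | succ n ih =>
          obtain ⟨h1, h2⟩ := ih
          set s := x + (n : ZMod p) * δ with hs
          have e1 : x + ((n + 1 : ℕ) : ZMod p) * δ = s + δ := by rw [hs]; push_cast; ring
          have e2 : s + 1 + δ = s + δ + 1 := by ring
          have hn1 : c (s + δ) ≠ Color.R := fun h => L1 s h1 h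
          have hn2 : c (s + δ + 1) ≠ Color.R := by
            rw [← e2]; exact fun h => L1 (s + 1) h2 h
          have heq' : c (s + δ + 1) = c (s + δ) := by
            rcases hRdom (s + δ) with h | h | h
            · exact h.symm
            · exact absurd h hn1
            · exact absurd h hn2
          have hYs : c (s + δ) = Color.Y := by
            by_contra hne
            have := MidpointRed.const_of_adj_eq hRdom hY2dom hn1 hne heq' (i + 1)
            rw [hi1] at this; exact hn1 this.symm
          rw [e1]
          exact ⟨hYs, by rw [heq', hYs]⟩
      -- wrap around: j invertible
      haveI := Fact.mk hp
      have hδ0 : δ ≠ 0 := by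
        rw [hδdef, Ne, ZMod.natCast_eq_zero_iff]
        intro hdvd
        have := Nat.le_of_dvd hj0 hdvd
        omega
      obtain ⟨n, hn⟩ := ZMod.natCast_zmod_surjective ((i + 1 - x) * δ⁻¹)
      have := (key n).1
      rw [hn] at this
      have e : x + (i + 1 - x) * δ⁻¹ * δ = i + 1 := by
        rw [mul_assoc, inv_mul_cancel₀ hδ0, mul_one]; ring
      rw [e, hi1] at this
      cases this
    · -- adjacent same non-R non-Y color
      have := MidpointRed.const_of_adj_eq hRdom hY2dom hR hY heq (i + 1)
      rw [hi1] at this; exact hR this.symm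
  have flank_fwd : ∀ x : ZMod p, c x ≠ Color.R → c (x + 1) = Color.R := by
    intro x hR
    rcases hRdom x with h | h | h
    · exact absurd h.symm (fun h' => noadj x hR h')
    · exact absurd h hR
    · exact h
  have flank_bwd : ∀ x : ZMod p, c x ≠ Color.R → c (x - 1) = Color.R := by
    intro x hR
    have e : x - 1 + 1 = x := by ring
    rcases hRdom (x - 1) with h | h | h
    · rw [e] at h
      exact ((noadj (x - 1) (fun hc => hR (h ▸ hc)) (by rw [e, h])).elim)
    · exact h
    · rw [e] at h; exact absurd h hR
  -- midpoint setup
  obtain ⟨k, hk⟩ := hjodd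
  have hm1 : (j - 1) / 2 = k := by omega
  have hm2 : (j + 1) / 2 = k + 1 := by omega
  set M : ZMod p := i + (k : ZMod p) with hM
  have hMM : ∀ a b : ZMod p, a + b = M + (M + 1) → a + b = i + (i + δ) := by
    intro a b h
    rw [h, hM, hδdef, hk]; push_cast; ring
  -- rule out G/B at M
  have noW_M : c M ≠ Color.R → c M ≠ Color.Y → False := by
    intro hWR hWY
    have key : ∀ u : ℕ, c (M - 2 * (u : ZMod p)) = c M ∧
        c (M + 2 * (u : ZMod p) + 2) = c M := by
      intro u
      induction u with
      | zero =>
        refine ⟨by norm_num, ?_⟩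
        have hfb : c (M - 1) = Color.R := flank_bwd M hWR
        rcases hY2dom M with h | h | h
        · simpa using h.symm
        · exact absurd h hWY
        · exact (C1 (M - 1) (M + 2) (hMM _ _ (by ring)) hfb h).elim
      | succ u ih =>
        obtain ⟨hL, hR⟩ := ih
        set L := M - 2 * (u : ZMod p) with hLdef
        set Rc := M + 2 * (u : ZMod p) + 2 with hRdef
        have hLR : c L ≠ Color.R := by rw [hL]; exact hWR
        have hLY : c L ≠ Color.Y := by rw [hL]; exact hWY
        have hRR : c Rc ≠ Color.R := by rw [hR]; exact hWR
        have hRY : c Rc ≠ Color.Y := by rw [hR]; exact hWY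
        have hfR : c (Rc + 1) = Color.R := flank_fwd Rc hRR
        have eL : L - 2 + 2 = L := by ring
        have hL2 : c (L - 2) = c M := by
          rcases hY2dom (L - 2) with h | h | h
          · rw [eL] at h; rw [h, hL]
          · exact (C1 (Rc + 1) (L - 2)
              (hMM _ _ (by rw [hLdef, hRdef]; ring)) hfR h).elim
          · rw [eL] at h; exact absurd h hLY
        have hL2R : c (L - 2) ≠ Color.R := by rw [hL2]; exact hWR
        have hfL2 : c (L - 2 - 1) = Color.R := flank_bwd (L - 2) hL2R
        have hR2 : c (Rc + 2) = c M := by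
          rcases hY2dom Rc with h | h | h
          · rw [← h, hR]
          · exact absurd h hRY
          · exact (C1 (L - 2 - 1) (Rc + 2)
              (hMM _ _ (by rw [hLdef, hRdef]; ring)) hfL2 h).elim
        constructor
        · have e : M - 2 * ((u + 1 : ℕ) : ZMod p) = L - 2 := by rw [hLdef]; push_cast; try ring
          rw [e]; exact hL2
        · have e : M + 2 * ((u + 1 : ℕ) : ZMod p) + 2 = Rc + 2 := by
            rw [hRdef]; push_cast; try ring
          rw [e]; exact hR2
    -- wrap around with 2 invertible
    haveI := Fact.mk hp
    have h20 : (2 : ZMod p) ≠ 0 := by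
      have : ((2 : ℕ) : ZMod p) ≠ 0 := by
        rw [Ne, ZMod.natCast_eq_zero_iff]
        intro hdvd
        have := Nat.le_of_dvd (by norm_num) hdvd
        omega
      simpa using this
    obtain ⟨u, hu⟩ := ZMod.natCast_zmod_surjective ((M - (i + 1)) * (2 : ZMod p)⁻¹)
    have := (key u).1
    rw [hu] at this
    have e : M - 2 * ((M - (i + 1)) * (2 : ZMod p)⁻¹) = i + 1 := by
      rw [mul_comm (2 : ZMod p) _, mul_assoc, inv_mul_cancel₀ h20, mul_one]; ring
    rw [e, hi1] at this
    exact hWR this.symm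
  -- rule out G/B at M + 1
  have noW_M1 : c (M + 1) ≠ Color.R → c (M + 1) ≠ Color.Y → False := by
    intro hWR hWY
    have key : ∀ u : ℕ, c (M + 1 + 2 * (u : ZMod p)) = c (M + 1) ∧
        c (M - 1 - 2 * (u : ZMod p)) = c (M + 1) := by
      intro u
      induction u with
      | zero =>
        refine ⟨by norm_num, ?_⟩
        have hff : c (M + 1 + 1) = Color.R := flank_fwd (M + 1) hWR
        have e : M - 1 + 2 = M + 1 := by ring
        rcases hY2dom (M - 1) with h | h | h
        · rw [e] at h; simpa using h
        · exact (C1 (M + 1 + 1) (M - 1)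
            (hMM _ _ (by ring)) hff h).elim
        · rw [e] at h; exact absurd h hWY
      | succ u ih =>
        obtain ⟨hR, hL⟩ := ih
        set Rc := M + 1 + 2 * (u : ZMod p) with hRdef
        set L := M - 1 - 2 * (u : ZMod p) with hLdef
        have hRR : c Rc ≠ Color.R := by rw [hR]; exact hWR
        have hRY : c Rc ≠ Color.Y := by rw [hR]; exact hWY
        have hLR : c L ≠ Color.R := by rw [hL]; exact hWR
        have hLY : c L ≠ Color.Y := by rw [hL]; exact hWY
        have hfL : c (L - 1) = Color.R := flank_bwd L hLR
        have hR2 : c (Rc + 2) = c (M + 1) := by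
          rcases hY2dom Rc with h | h | h
          · rw [← h, hR]
          · exact absurd h hRY
          · exact (C1 (L - 1) (Rc + 2)
              (hMM _ _ (by rw [hLdef, hRdef]; ring)) hfL h).elim
        have hR2R : c (Rc + 2) ≠ Color.R := by rw [hR2]; exact hWR
        have hfR2 : c (Rc + 2 + 1) = Color.R := flank_fwd (Rc + 2) hR2R
        have eL : L - 2 + 2 = L := by ring
        have hL2 : c (L - 2) = c (M + 1) := by
          rcases hY2dom (L - 2) with h | h | h
          · rw [eL] at h; rw [h, hL]
          · exact (C1 (Rc + 2 + 1) (L - 2)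
              (hMM _ _ (by rw [hLdef, hRdef]; ring)) hfR2 h).elim
          · rw [eL] at h; exact absurd h hLY
        constructor
        · have e : M + 1 + 2 * ((u + 1 : ℕ) : ZMod p) = Rc + 2 := by
            rw [hRdef]; push_cast; try ring
          rw [e]; exact hR2
        · have e : M - 1 - 2 * ((u + 1 : ℕ) : ZMod p) = L - 2 := by
            rw [hLdef]; push_cast; try ring
          rw [e]; exact hL2
    haveI := Fact.mk hp
    have h20 : (2 : ZMod p) ≠ 0 := by
      have : ((2 : ℕ) : ZMod p) ≠ 0 := by
        rw [Ne, ZMod.natCast_eq_zero_iff]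
        intro hdvd
        have := Nat.le_of_dvd (by norm_num) hdvd
        omega
      simpa using this
    obtain ⟨u, hu⟩ := ZMod.natCast_zmod_surjective (((i + 1) - (M + 1)) * (2 : ZMod p)⁻¹)
    have := (key u).1
    rw [hu] at this
    have e : M + 1 + 2 * (((i + 1) - (M + 1)) * (2 : ZMod p)⁻¹) = i + 1 := by
      rw [mul_comm (2 : ZMod p) _, mul_assoc, inv_mul_cancel₀ h20, mul_one]; ring
    rw [e, hi1] at this
    exact hWR this.symm
  -- final case analysis
  have goal1 : c M = Color.R ∧ c (M + 1) = Color.R := by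
    rcases hcM : c M with _ | _ | _ | _
    · rcases hcM1 : c (M + 1) with _ | _ | _ | _
      · exact ⟨rfl, rfl⟩
      · exact (C1 M (M + 1) (hMM _ _ rfl) hcM hcM1).elim
      · exact (noW_M1 (by rw [hcM1]; decide) (by rw [hcM1]; decide)).elim
      · exact (noW_M1 (by rw [hcM1]; decide) (by rw [hcM1]; decide)).elim
    · rcases hcM1 : c (M + 1) with _ | _ | _ | _
      · exact (C1 (M + 1) M (hMM _ _ (by ring)) hcM1 hcM).elim
      · exact (noadj M (by rw [hcM]; decide) (by rw [hcM1, hcM])).elim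
      · exact (noW_M1 (by rw [hcM1]; decide) (by rw [hcM1]; decide)).elim
      · exact (noW_M1 (by rw [hcM1]; decide) (by rw [hcM1]; decide)).elim
    · exact (noW_M (by rw [hcM]; decide) (by rw [hcM]; decide)).elim
    · exact (noW_M (by rw [hcM]; decide) (by rw [hcM]; decide)).elim
  constructor
  · rw [hm1]; exact goal1.1
  · rw [hm2]
    have e : i + ((k + 1 : ℕ) : ZMod p) = M + 1 := by rw [hM]; push_cast; ring
    rw [e]; exact goal1.2
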